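/- There exists an absolute constant C > 0 with the following property. Let 2 ≤ a ≤ b, let F : [a,b] → ℝ be twice continuously differentiable, and let m > 0 and K ≥ 0 satisfy |F'(r)| ≥ m and |F''(r)| ≤ K |F'(r)|² (log r)^{3/4} / r for all r ∈ [a,b]. Then |∫_a^b e^{i F(r)} / (r (log r)^{3/4}) dr| ≤ C (1/m + K) / a. -/

import Mathlib

/-!
Since `e^{iF} = (e^{iF})' / (i F')`, integrating by parts against `ψ = 1 / (F' w)`, with
`w r = r (log r)^{3/4}`, bounds the integral by `|ψ a| + |ψ b| + ∫ |ψ'|`. The hypothesis on `F''`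
gives `|ψ'| ≤ K / r² + w' / (m w²)`, an exact derivative, so the boundary terms and `∫ |ψ'|` are
controlled by `1 / (m w a) + K / a`; finally `w a ≥ a / 2`.
-/

open MeasureTheory intervalIntegral

theorem abs_deriv_inv_mul_le {m K r f f' w w' : ℝ} (hr : 0 < r) (hw : 0 < w) (hw' : 0 ≤ w')
    (hm : 0 < m) (hf : m ≤ |f|) (hf' : |f'| ≤ K * |f| ^ 2 * w / r ^ 2) :
    |(f' * w + f * w') / (f * w) ^ 2| ≤ K / r ^ 2 + w' / (m * w ^ 2) := by
  have hf0 : 0 < |f| := hm.trans_le hf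
  rw [abs_div, abs_pow, abs_mul f, abs_of_pos hw]
  calc |f' * w + f * w'| / (|f| * w) ^ 2
      ≤ (|f'| * w + |f| * w') / (|f| * w) ^ 2 := by
        gcongr
        refine (abs_add_le _ _).trans_eq ?_
        rw [abs_mul, abs_mul, abs_of_pos hw, abs_of_nonneg hw']
    _ = |f'| / (|f| ^ 2 * w) + w' / (|f| * w ^ 2) := by field_simp
    _ ≤ K / r ^ 2 + w' / (m * w ^ 2) := by
        refine add_le_add ?_ (by gcongr)
        rw [div_le_div_iff₀ (by positivity) (by positivity)]
        calc |f'| * r ^ 2 ≤ K * |f| ^ 2 * w / r ^ 2 * r ^ 2 := by gcongr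
          _ = K * (|f| ^ 2 * w) := by field_simp

theorem integral_div_sq_add_deriv_div_mul_sq {a b m K : ℝ} {w w' : ℝ → ℝ} (hm : m ≠ 0)
    (hr_ne : ∀ r ∈ Set.uIcc a b, r ≠ 0) (hw : ∀ r ∈ Set.uIcc a b, HasDerivAt w (w' r) r)
    (hw_ne : ∀ r ∈ Set.uIcc a b, w r ≠ 0)
    (hint : IntervalIntegrable (fun r => K / r ^ 2 + w' r / (m * w r ^ 2)) volume a b) :
    ∫ r in a..b, K / r ^ 2 + w' r / (m * w r ^ 2) =
      K / a - K / b + (m * w a)⁻¹ - (m * w b)⁻¹ := by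
  have hG : ∀ r ∈ Set.uIcc a b, HasDerivAt (fun r => -(K * r⁻¹ + m⁻¹ * (w r)⁻¹))
      (K / r ^ 2 + w' r / (m * w r ^ 2)) r := fun r hr =>
    (((hasDerivAt_inv (hr_ne r hr)).const_mul K).add
      (((hw r hr).inv (hw_ne r hr)).const_mul m⁻¹)).neg.congr_deriv (by field_simp; ring)
  rw [integral_eq_sub_of_hasDerivAt hG hint]
  ring

open Complex in
theorem norm_integral_exp_mul_deriv_mul_le {a b : ℝ} (hab : a ≤ b) {F F' ψ ψ' g : ℝ → ℝ}
    (hF : ∀ x ∈ Set.Icc a b, HasDerivAt F (F' x) x) (hF' : IntervalIntegrable F' volume a b)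
    (hψ : ∀ x ∈ Set.Icc a b, HasDerivAt ψ (ψ' x) x) (hψ' : IntervalIntegrable ψ' volume a b)
    (hψ'_le : ∀ x ∈ Set.Icc a b, |ψ' x| ≤ g x) (hg : IntervalIntegrable g volume a b) :
    ‖∫ x in a..b, exp (I * F x) * (F' x * ψ x)‖ ≤ |ψ a| + |ψ b| + ∫ x in a..b, g x := by
  rw [← Set.uIcc_of_le hab] at hF hψ hψ'_le
  set v : ℝ → ℂ := fun x => -I * exp (I * F x)
  have hv : ∀ x ∈ Set.uIcc a b, HasDerivAt v (F' x • exp (I * F x)) x := fun x hx =>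
    (((hF x hx).ofReal_comp.const_mul I).cexp.const_mul (-I)).congr_deriv <| by
      rw [real_smul]; ring_nf; rw [I_sq]; ring
  have hv_norm (x : ℝ) : ‖v x‖ = 1 := by simp [v, norm_exp_I_mul_ofReal]
  have hexp : ContinuousOn (fun x => exp (I * F x)) (Set.uIcc a b) :=
    (continuousOn_const.mul (continuous_ofReal.comp_continuousOn
      (HasDerivAt.continuousOn hF))).cexp
  have hparts := integral_smul_deriv_eq_deriv_smul hψ hv hψ' (hF'.smul_continuousOn hexp)
  have hrem : ‖∫ x in a..b, ψ' x • v x‖ ≤ ∫ x in a..b, g x :=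
    norm_integral_le_of_norm_le hab (ae_of_all _ fun x hx => by
      simpa [norm_smul, hv_norm] using hψ'_le x (Set.Ioc_subset_Icc_self hx |>
        (Set.uIcc_of_le hab).symm.subset)) hg
  have hintegrand : (fun x => exp (I * F x) * (F' x * ψ x)) =
      fun x => ψ x • F' x • exp (I * F x) := by
    ext x; simp only [real_smul]; ring
  rw [hintegrand, hparts]
  calc ‖ψ b • v b - ψ a • v a - ∫ x in a..b, ψ' x • v x‖
      ≤ ‖ψ b • v b‖ + ‖ψ a • v a‖ + ‖∫ x in a..b, ψ' x • v x‖ :=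
        (norm_sub_le _ _).trans (by gcongr; exact norm_sub_le _ _)
    _ ≤ |ψ a| + |ψ b| + ∫ x in a..b, g x := by
      simp only [norm_smul, hv_norm, mul_one, Real.norm_eq_abs]; linarith

open Complex in
theorem norm_integral_exp_div_weight_le {a b m K : ℝ} (ha : 0 < a) (hab : a ≤ b)
    {F F' F'' w w' : ℝ → ℝ}
    (hF : ∀ r ∈ Set.Icc a b, HasDerivAt F (F' r) r)
    (hF' : ∀ r ∈ Set.Icc a b, HasDerivAt F' (F'' r) r) (hF'' : ContinuousOn F'' (Set.Icc a b))
    (hw : ∀ r ∈ Set.Icc a b, HasDerivAt w (w' r) r) (hw' : ContinuousOn w' (Set.Icc a b))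
    (hw_pos : ∀ r ∈ Set.Icc a b, 0 < w r) (hw'_nonneg : ∀ r ∈ Set.Icc a b, 0 ≤ w' r)
    (hm : 0 < m) (hK : 0 ≤ K) (hF'_ge : ∀ r ∈ Set.Icc a b, m ≤ |F' r|)
    (hF''_le : ∀ r ∈ Set.Icc a b, |F'' r| ≤ K * |F' r| ^ 2 * w r / r ^ 2) :
    ‖∫ r in a..b, exp (I * F r) / w r‖ ≤ 2 / (m * w a) + K / a := by
  have hr_pos : ∀ r ∈ Set.Icc a b, 0 < r := fun r hr => ha.trans_le hr.1
  have hF'w_ne : ∀ r ∈ Set.Icc a b, F' r * w r ≠ 0 := fun r hr =>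
    mul_ne_zero (abs_pos.mp (hm.trans_le (hF'_ge r hr))) (hw_pos r hr).ne'
  have hF'c : ContinuousOn F' (Set.Icc a b) := HasDerivAt.continuousOn hF'
  have hwc : ContinuousOn w (Set.Icc a b) := HasDerivAt.continuousOn hw
  set ψ : ℝ → ℝ := fun r => (F' r * w r)⁻¹
  set ψ' : ℝ → ℝ := fun r => -(F'' r * w r + F' r * w' r) / (F' r * w r) ^ 2
  set g : ℝ → ℝ := fun r => K / r ^ 2 + w' r / (m * w r ^ 2)
  have hψ : ∀ r ∈ Set.Icc a b, HasDerivAt ψ (ψ' r) r := fun r hr =>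
    ((hF' r hr).mul (hw r hr)).inv (hF'w_ne r hr)
  have hψ'_le : ∀ r ∈ Set.Icc a b, |ψ' r| ≤ g r := fun r hr => by
    simpa only [ψ', neg_div, abs_neg] using abs_deriv_inv_mul_le (hr_pos r hr) (hw_pos r hr)
      (hw'_nonneg r hr) hm (hF'_ge r hr) (hF''_le r hr)
  have hψ_le : ∀ r ∈ Set.Icc a b, |ψ r| ≤ (m * w r)⁻¹ := fun r hr => by
    rw [abs_inv, abs_mul, abs_of_pos (hw_pos r hr)]
    exact inv_anti₀ (mul_pos hm (hw_pos r hr)) (by gcongr; exacts [(hw_pos r hr).le, hF'_ge r hr])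
  rw [← Set.uIcc_of_le hab] at hr_pos hF'w_ne hF'c hwc hF'' hw' hw hw_pos
  have hψ'_int : IntervalIntegrable ψ' volume a b :=
    ContinuousOn.intervalIntegrable <| ContinuousOn.div (by fun_prop) (by fun_prop)
      fun r hr => pow_ne_zero 2 (hF'w_ne r hr)
  have hg_int : IntervalIntegrable g volume a b :=
    ContinuousOn.intervalIntegrable <| ContinuousOn.add
      (ContinuousOn.div (by fun_prop) (by fun_prop) fun r hr => pow_ne_zero 2 (hr_pos r hr).ne')
      (ContinuousOn.div (by fun_prop) (by fun_prop) fun r hr =>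
        mul_ne_zero hm.ne' (pow_ne_zero 2 (hw_pos r hr).ne'))
  have hg_integral : ∫ r in a..b, g r = K / a - K / b + (m * w a)⁻¹ - (m * w b)⁻¹ :=
    integral_div_sq_add_deriv_div_mul_sq hm.ne' (fun r hr => (hr_pos r hr).ne') hw
      (fun r hr => (hw_pos r hr).ne') hg_int
  have hintegrand : ∫ r in a..b, exp (I * F r) / w r =
      ∫ r in a..b, exp (I * F r) * (F' r * ψ r) :=
    integral_congr fun r hr => by
      obtain ⟨hF'_ne, hw_ne⟩ := mul_ne_zero_iff.mp (hF'w_ne r hr)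
      have := ofReal_ne_zero.mpr hF'_ne
      have := ofReal_ne_zero.mpr hw_ne
      simp only [ψ]; push_cast; field_simp
  rw [hintegrand]
  calc _ ≤ |ψ a| + |ψ b| + ∫ r in a..b, g r :=
        norm_integral_exp_mul_deriv_mul_le hab hF hF'c.intervalIntegrable hψ hψ'_int hψ'_le hg_int
    _ ≤ 2 / (m * w a) + K / a := by
        rw [hg_integral, div_eq_mul_inv 2]
        linarith [hψ_le a ⟨le_rfl, hab⟩, hψ_le b ⟨hab, le_rfl⟩, div_nonneg hK (ha.le.trans hab)]

theorem half_le_log_rpow {p r : ℝ} (hp₀ : 0 ≤ p) (hp₁ : p ≤ 1) (hr : 2 ≤ r) :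
    1 / 2 ≤ Real.log r ^ p := by
  have hlog : 1 / 2 ≤ Real.log r := by
    linarith [Real.log_two_gt_d9, Real.log_le_log two_pos hr]
  calc (1 / 2 : ℝ) ≤ (1 / 2) ^ p := Real.self_le_rpow_of_le_one (by norm_num) (by norm_num) hp₁
    _ ≤ Real.log r ^ p := by gcongr

theorem hasDerivAt_mul_log_rpow {p r : ℝ} (hr : 1 < r) :
    HasDerivAt (fun r => r * Real.log r ^ p) (Real.log r ^ p + p * Real.log r ^ (p - 1)) r := by
  have hr₀ : r ≠ 0 := by positivity
  refine ((hasDerivAt_id r).mul ((Real.hasDerivAt_log hr₀).rpow_const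
    (Or.inl (Real.log_pos hr).ne'))).congr_deriv ?_
  simp only [id_eq]
  field_simp

theorem continuousOn_log_rpow_add_mul_log_rpow_sub_one {s : Set ℝ} {p : ℝ}
    (hs : ∀ r ∈ s, 1 < r) :
    ContinuousOn (fun r => Real.log r ^ p + p * Real.log r ^ (p - 1)) s := by
  have hlog : ContinuousOn Real.log s :=
    Real.continuousOn_log.mono fun r hr => (zero_lt_one.trans (hs r hr)).ne'
  have hlog_ne (q : ℝ) : ∀ r ∈ s, Real.log r ≠ 0 ∨ 0 ≤ q :=
    fun r hr => .inl (Real.log_pos (hs r hr)).ne'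
  exact (hlog.rpow_const (hlog_ne _)).add (continuousOn_const.mul (hlog.rpow_const (hlog_ne _)))

/-- Integration-by-parts oscillatory integral estimate: there is an absolute constant `C > 0`
such that for `2 ≤ a ≤ b`, any twice continuously differentiable phase `F` on `[a,b]` with
`|F'| ≥ m > 0` and `|F''(r)| ≤ K |F'(r)|² (log r)^{3/4} / r`, one has
`|∫_a^b e^{iF(r)} / (r (log r)^{3/4}) dr| ≤ C (1/m + K) / a`. -/
theorem oscillatory_integral_estimate_quotient
    : ∃ C : ℝ, 0 < C ∧
      ∀ a b : ℝ, 2 ≤ a → a ≤ b →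
      ∀ F F' F'' : ℝ → ℝ,
        (∀ r ∈ Set.Icc a b, HasDerivAt F (F' r) r) →
        (∀ r ∈ Set.Icc a b, HasDerivAt F' (F'' r) r) →
        ContinuousOn F'' (Set.Icc a b) →
      ∀ m : ℝ, 0 < m → ∀ K : ℝ, 0 ≤ K →
        (∀ r ∈ Set.Icc a b, m ≤ |F' r|) →
        (∀ r ∈ Set.Icc a b, |F'' r| ≤ K * |F' r| ^ 2 * Real.log r ^ ((3 : ℝ) / 4) / r) →
        ‖∫ r in a..b, Complex.exp (Complex.I * (F r : ℝ)) /
            ((r * Real.log r ^ ((3 : ℝ) / 4) : ℝ) : ℂ)‖ ≤ C * (1 / m + K) / a := by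
  refine ⟨4, by norm_num, fun a b ha hab F F' F'' hF hF' hF'' m hm K hK hF'_ge hF''_le => ?_⟩
  have h1r : ∀ r ∈ Set.Icc a b, 1 < r := fun r hr => by linarith [hr.1]
  have hr_pos : ∀ r ∈ Set.Icc a b, 0 < r := fun r hr => zero_lt_one.trans (h1r r hr)
  have hlog_pos : ∀ r ∈ Set.Icc a b, 0 < Real.log r := fun r hr => Real.log_pos (h1r r hr)
  have hw_pos : ∀ r ∈ Set.Icc a b, 0 < r * Real.log r ^ ((3 : ℝ) / 4) := fun r hr =>
    mul_pos (hr_pos r hr) (Real.rpow_pos_of_pos (hlog_pos r hr) _)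
  have hwa : a / 2 ≤ a * Real.log a ^ ((3 : ℝ) / 4) := by
    have := half_le_log_rpow (p := 3 / 4) (by norm_num) (by norm_num) ha
    nlinarith
  have hbound := norm_integral_exp_div_weight_le (by linarith) hab hF hF' hF''
    (fun r hr => hasDerivAt_mul_log_rpow (h1r r hr))
    (continuousOn_log_rpow_add_mul_log_rpow_sub_one h1r)
    hw_pos (fun r hr => by have := (hlog_pos r hr).le; positivity) hm hK hF'_ge
    (fun r hr => (hF''_le r hr).trans_eq (by field_simp [(hr_pos r hr).ne']))
  calc _ ≤ 2 / (m * (a * Real.log a ^ ((3 : ℝ) / 4))) + K / a := hbound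
    _ ≤ 2 / (m * (a / 2)) + K / a := by gcongr
    _ = (4 / m + K) / a := by field_simp; ring
    _ ≤ 4 * (1 / m + K) / a := by gcongr; rw [mul_add, mul_one_div]; linarith
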